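/- arXiv:cond-mat/0701207 — 6 statements merged into one kernel-verified Lean document; each statement's English description precedes it below -/
import Mathlib

section
/- Let L ≥ 1, let γ_1,…,γ_L be real numbers and a_1,…,a_L nonnegative integers, and define e_p(z) = (z + ip/2)/(z − ip/2) for real p and complex z. Then the following are equivalent: (i) for every nonnegative integer M and every real λ such that all denominators involved are nonzero, ∏_{ℓ=1}^{L} ∏_{r=0}^{M} e_{a_ℓ−M+2r}(λ + iγ_ℓ) · e_{−(a_ℓ−M+2r)}(λ − iγ_ℓ) = 1; (ii) for every integer p with 0 ≤ p ≤ L, ∑_{ℓ=1}^{L} (γ_ℓ + a_ℓ/2)^{2p} = ∑_{ℓ=1}^{L} (γ_ℓ − a_ℓ/2)^{2p}. -/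
open Complex BigOperators

/-- The rational function `e_p(z) = (z + ip/2)/(z - ip/2)`. -/
noncomputable def eFn (p : ℝ) (z : ℂ) : ℂ :=
  (z + Complex.I * (p : ℂ) / 2) / (z - Complex.I * (p : ℂ) / 2)

/-!
Put `x_ℓ = γ_ℓ + a_ℓ/2` and `y_ℓ = γ_ℓ - a_ℓ/2`. Each factor `e_p(λ + iγ) e_{-p}(λ - iγ)` is the
real ratio `(λ² + (γ + p/2)²) / (λ² + (γ - p/2)²)`, so the Bethe product over a string of length
`M + 1` is `∏ Q_M(λ, x_ℓ) / ∏ Q_M(λ, y_ℓ)`, where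
`Q_M(λ, t) = stringPoly M λ t = ∏_r (λ² + (t + r - M/2)²)` is even in `t` because the string is
symmetric about its centre.

Both conditions say that the multisets `{x_ℓ²}` and `{y_ℓ²}` coincide. For the power sums this is
Newton's identities: the first `L` power sums determine the elementary symmetric functions, hence
the polynomial `∏ (X + x_ℓ²)` and its roots. For the Bethe equations, `M = 0` gives
`∏ (λ² + x_ℓ²) = ∏ (λ² + y_ℓ²)` for all `λ ≠ 0`, an identity of polynomials in `λ²`; conversely,
equal multisets of squares give equal products of the even function `Q_M`.
-/

open Finset Polynomial

namespace Multiset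

variable {R : Type*} [CommRing R] [IsDomain R]

theorem eq_of_prod_X_add_C_eq {s t : Multiset R}
    (h : (s.map fun r => X + C r).prod = (t.map fun r => X + C r).prod) : s = t := by
  have hroots (u : Multiset R) : (u.map fun r => X + C r).prod.roots = u.map Neg.neg := by
    simpa [sub_eq_add_neg, Multiset.map_map, Function.comp_def] using
      roots_multiset_prod_X_sub_C (u.map Neg.neg)
  have := congrArg roots h
  rw [hroots, hroots] at this
  exact Multiset.map_injective neg_injective this

theorem eq_of_esymm_eq {s t : Multiset R} (hcard : card s = card t)
    (h : ∀ k ≤ card s, s.esymm k = t.esymm k) : s = t := by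
  refine eq_of_prod_X_add_C_eq ?_
  rw [prod_X_add_C_eq_sum_esymm, prod_X_add_C_eq_sum_esymm, ← hcard]
  exact Finset.sum_congr rfl fun k hk => by
    rw [h k (Nat.lt_succ_iff.mp (Finset.mem_range.mp hk))]

end Multiset

section Families

variable {ι : Type*} [Fintype ι]

@[to_additive]
theorem Finset.prod_comp_eq_of_map_univ_eq {α β : Type*} [CommMonoid β] {f g : ι → α}
    (h : univ.val.map f = univ.val.map g) (F : α → β) : ∏ i, F (f i) = ∏ i, F (g i) := by
  simpa [Multiset.map_map] using congrArg (fun s => (s.map F).prod) h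

theorem map_univ_eq_of_prod_add_eq {K : Type*} [Field K] {u v : ι → K} {S : Set K}
    (hS : S.Infinite) (h : ∀ x ∈ S, ∏ i, (x + u i) = ∏ i, (x + v i)) :
    univ.val.map u = univ.val.map v := by
  refine Multiset.eq_of_prod_X_add_C_eq ?_
  refine eq_of_infinite_eval_eq _ _ (hS.mono fun x hx => ?_)
  simpa [eval_multiset_prod, Multiset.map_map, eval_prod] using h x hx

theorem esymm_map_univ_eq_of_sum_pow_eq {K : Type*} [Field K] [CharZero K] {f g : ι → K}
    (h : ∀ p ≤ Fintype.card ι, ∑ i, f i ^ p = ∑ i, g i ^ p) :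
    ∀ k ≤ Fintype.card ι, (univ.val.map f).esymm k = (univ.val.map g).esymm k := by
  have newton (f : ι → K) (k : ℕ) : (k : K) * (univ.val.map f).esymm k = (-1) ^ (k + 1) *
      ∑ a ∈ antidiagonal k with a.1 < k,
        (-1) ^ a.1 * (univ.val.map f).esymm a.1 * ∑ i, f i ^ a.2 := by
    simpa only [map_mul, map_sum, map_pow, map_neg, map_one, map_natCast, MvPolynomial.psum,
      MvPolynomial.aeval_X, MvPolynomial.aeval_esymm_eq_multiset_esymm] using
      congrArg (MvPolynomial.aeval f) (MvPolynomial.mul_esymm_eq_sum ι K k)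
  intro k
  induction k using Nat.strong_induction_on with
  | _ k ih =>
    intro hk
    rcases Nat.eq_zero_or_pos k with rfl | hk0
    · simp [Multiset.esymm]
    · refine mul_left_cancel₀ (Nat.cast_ne_zero.mpr hk0.ne') ?_
      rw [newton f k, newton g k]
      congr 1
      refine Finset.sum_congr rfl fun b hb => ?_
      rw [Finset.mem_filter, HasAntidiagonal.mem_antidiagonal] at hb
      rw [ih b.1 hb.2 (hb.2.le.trans hk), h b.2 (by omega)]

theorem map_univ_eq_iff_sum_pow_eq {K : Type*} [Field K] [CharZero K] {f g : ι → K} :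
    univ.val.map f = univ.val.map g ↔ ∀ p ≤ Fintype.card ι, ∑ i, f i ^ p = ∑ i, g i ^ p :=
  ⟨fun h p _ => sum_comp_eq_of_map_univ_eq h (· ^ p), fun h =>
    Multiset.eq_of_esymm_eq (by simp) (by simpa using esymm_map_univ_eq_of_sum_pow_eq h)⟩

end Families

noncomputable def stringPoly (M : ℕ) (lam t : ℝ) : ℝ :=
  ∏ r ∈ range (M + 1), (lam ^ 2 + (t + r - M / 2) ^ 2)

section StringPoly

variable (M : ℕ) (lam : ℝ)

@[simp]
theorem stringPoly_zero (t : ℝ) : stringPoly 0 lam t = lam ^ 2 + t ^ 2 := by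
  simp [stringPoly]

theorem stringPoly_neg (t : ℝ) : stringPoly M lam (-t) = stringPoly M lam t := by
  rw [stringPoly, ← prod_range_reflect]
  refine prod_congr rfl fun r hr => ?_
  rw [Nat.add_sub_cancel, Nat.cast_sub (Nat.lt_succ_iff.mp (mem_range.mp hr))]
  ring

theorem stringPoly_congr_sq {s t : ℝ} (h : s ^ 2 = t ^ 2) :
    stringPoly M lam s = stringPoly M lam t := by
  rcases sq_eq_sq_iff_eq_or_eq_neg.mp h with rfl | rfl
  · rfl
  · exact stringPoly_neg M lam t

theorem stringPoly_eq_sqrt_sq (t : ℝ) : stringPoly M lam t = stringPoly M lam √(t ^ 2) :=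
  stringPoly_congr_sq M lam (Real.sq_sqrt (sq_nonneg t)).symm

theorem prod_sq_add_eq_stringPoly (g a : ℝ) :
    ∏ r ∈ range (M + 1), (lam ^ 2 + (g + (a - M + 2 * r) / 2) ^ 2) =
      stringPoly M lam (g + a / 2) :=
  prod_congr rfl fun r _ => by ring

theorem prod_sq_sub_eq_stringPoly (g a : ℝ) :
    ∏ r ∈ range (M + 1), (lam ^ 2 + (g - (a - M + 2 * r) / 2) ^ 2) =
      stringPoly M lam (g - a / 2) := by
  rw [← stringPoly_neg, show -(g - a / 2) = -g + a / 2 by ring, ← prod_sq_add_eq_stringPoly]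
  exact prod_congr rfl fun r _ => by ring

theorem prod_stringPoly_eq_of_map_sq_eq {ι : Type*} [Fintype ι] {x y : ι → ℝ}
    (h : univ.val.map (fun i => x i ^ 2) = univ.val.map (fun i => y i ^ 2)) :
    ∏ i, stringPoly M lam (x i) = ∏ i, stringPoly M lam (y i) := by
  simpa only [← stringPoly_eq_sqrt_sq] using
    prod_comp_eq_of_map_univ_eq h (fun u => stringPoly M lam √u)

end StringPoly

theorem eFn_mul_eFn_neg (p g lam : ℝ) :
    eFn p (lam + I * g) * eFn (-p) (lam - I * g) =
      ((lam ^ 2 + (g + p / 2) ^ 2 : ℝ) : ℂ) / ((lam ^ 2 + (g - p / 2) ^ 2 : ℝ) : ℂ) := by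
  rw [eFn, eFn, div_mul_div_comm]
  congr 1 <;> push_cast
  · linear_combination (-((g : ℂ) + p / 2) ^ 2) * I_sq
  · linear_combination (-((g : ℂ) - p / 2) ^ 2) * I_sq

section Bethe

variable {ι : Type*} [Fintype ι] (γ a : ι → ℝ) (M : ℕ) (lam : ℝ)

theorem prod_eFn_string_eq :
    ∏ ℓ, ∏ r ∈ range (M + 1),
        eFn (a ℓ - M + 2 * r) (lam + I * γ ℓ) * eFn (-(a ℓ - M + 2 * r)) (lam - I * γ ℓ) =
      ((∏ ℓ, stringPoly M lam (γ ℓ + a ℓ / 2) : ℝ) : ℂ) /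
        ((∏ ℓ, stringPoly M lam (γ ℓ - a ℓ / 2) : ℝ) : ℂ) := by
  simp_rw [eFn_mul_eFn_neg, prod_div_distrib, ← ofReal_prod, prod_sq_add_eq_stringPoly,
    prod_sq_sub_eq_stringPoly]

theorem prod_eFn_string_eq_one_iff
    (hden : ∀ ℓ, ∀ r ∈ range (M + 1), (lam + I * γ ℓ) - I * ((a ℓ - M + 2 * r : ℝ) : ℂ) / 2 ≠ 0) :
    ∏ ℓ, ∏ r ∈ range (M + 1),
        eFn (a ℓ - M + 2 * r) (lam + I * γ ℓ) * eFn (-(a ℓ - M + 2 * r)) (lam - I * γ ℓ) = 1 ↔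
      ∏ ℓ, stringPoly M lam (γ ℓ + a ℓ / 2) = ∏ ℓ, stringPoly M lam (γ ℓ - a ℓ / 2) := by
  have hfactor (ℓ : ι) (r : ℕ) (hr : r ∈ range (M + 1)) :
      lam ^ 2 + (γ ℓ - (a ℓ - M + 2 * r) / 2) ^ 2 ≠ 0 := by
    rw [← normSq_add_mul_I, Ne, normSq_eq_zero]
    convert hden ℓ r hr using 2
    push_cast
    ring
  have hne : ∏ ℓ, stringPoly M lam (γ ℓ - a ℓ / 2) ≠ 0 :=
    prod_ne_zero_iff.mpr fun ℓ _ => prod_sq_sub_eq_stringPoly M lam _ _ ▸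
      prod_ne_zero_iff.mpr (hfactor ℓ)
  rw [prod_eFn_string_eq, div_eq_one_iff_eq (ofReal_ne_zero.mpr hne), ofReal_inj]

end Bethe

theorem stmt_0_general (L : ℕ) (γ : Fin L → ℝ) (a : Fin L → ℕ) :
    (∀ M : ℕ, ∀ lam : ℝ,
      (∀ ℓ : Fin L, ∀ r ∈ Finset.range (M + 1),
        ((lam : ℂ) + Complex.I * (γ ℓ : ℂ))
            - Complex.I * (((a ℓ : ℝ) - (M : ℝ) + 2 * (r : ℝ) : ℝ) : ℂ) / 2 ≠ 0 ∧
        ((lam : ℂ) - Complex.I * (γ ℓ : ℂ))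
            + Complex.I * (((a ℓ : ℝ) - (M : ℝ) + 2 * (r : ℝ) : ℝ) : ℂ) / 2 ≠ 0) →
      ∏ ℓ : Fin L, ∏ r ∈ Finset.range (M + 1),
        eFn ((a ℓ : ℝ) - (M : ℝ) + 2 * (r : ℝ)) ((lam : ℂ) + Complex.I * (γ ℓ : ℂ)) *
        eFn (-((a ℓ : ℝ) - (M : ℝ) + 2 * (r : ℝ))) ((lam : ℂ) - Complex.I * (γ ℓ : ℂ)) = 1) ↔
    (∀ p : ℕ, p ≤ L →
      ∑ ℓ : Fin L, (γ ℓ + (a ℓ : ℝ) / 2) ^ (2 * p) =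
      ∑ ℓ : Fin L, (γ ℓ - (a ℓ : ℝ) / 2) ^ (2 * p)) := by
  have hpow := map_univ_eq_iff_sum_pow_eq (f := fun ℓ => (γ ℓ + (a ℓ : ℝ) / 2) ^ 2)
    (g := fun ℓ => (γ ℓ - (a ℓ : ℝ) / 2) ^ 2)
  simp only [Fintype.card_fin, ← pow_mul] at hpow
  rw [← hpow]
  constructor
  · intro h
    refine map_univ_eq_of_prod_add_eq (Set.Ioi_infinite 0) fun u hu => ?_
    have hre {z : ℂ} (hz : z.re = √u) : z ≠ 0 := fun h0 =>
      (Real.sqrt_pos.mpr hu).ne (by rw [← hz, h0, zero_re])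
    have hbethe := h 0 √u fun ℓ r _ => ⟨hre (by simp), hre (by simp)⟩
    rw [prod_eFn_string_eq_one_iff γ (fun ℓ => (a ℓ : ℝ)) 0 √u fun ℓ r _ => hre (by simp)]
      at hbethe
    simpa [Real.sq_sqrt hu.le] using hbethe
  · intro h M lam hden
    exact (prod_eFn_string_eq_one_iff γ (fun ℓ => (a ℓ : ℝ)) M lam
      fun ℓ r hr => (hden ℓ r hr).1).mpr (prod_stringPoly_eq_of_map_sq_eq M lam h)

theorem stmt_0 (L : ℕ) (hL : 1 ≤ L) (γ : Fin L → ℝ) (a : Fin L → ℕ) :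
    (∀ M : ℕ, ∀ lam : ℝ,
      (∀ ℓ : Fin L, ∀ r ∈ Finset.range (M + 1),
        ((lam : ℂ) + Complex.I * (γ ℓ : ℂ))
            - Complex.I * (((a ℓ : ℝ) - (M : ℝ) + 2 * (r : ℝ) : ℝ) : ℂ) / 2 ≠ 0 ∧
        ((lam : ℂ) - Complex.I * (γ ℓ : ℂ))
            + Complex.I * (((a ℓ : ℝ) - (M : ℝ) + 2 * (r : ℝ) : ℝ) : ℂ) / 2 ≠ 0) →
      ∏ ℓ : Fin L, ∏ r ∈ Finset.range (M + 1),
        eFn ((a ℓ : ℝ) - (M : ℝ) + 2 * (r : ℝ)) ((lam : ℂ) + Complex.I * (γ ℓ : ℂ)) *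
        eFn (-((a ℓ : ℝ) - (M : ℝ) + 2 * (r : ℝ))) ((lam : ℂ) - Complex.I * (γ ℓ : ℂ)) = 1) ↔
    (∀ p : ℕ, p ≤ L →
      ∑ ℓ : Fin L, (γ ℓ + (a ℓ : ℝ) / 2) ^ (2 * p) =
      ∑ ℓ : Fin L, (γ ℓ - (a ℓ : ℝ) / 2) ^ (2 * p)) :=
  stmt_0_general L γ a
end

section
/- Let γ_1, γ_2 be real numbers and a_1, a_2 nonnegative real numbers. Then the two equations (γ_1 + a_1/2)^{2p} + (γ_2 + a_2/2)^{2p} = (γ_1 − a_1/2)^{2p} + (γ_2 − a_2/2)^{2p} for p = 1 and p = 2 hold if and only if at least one of the following three conditions is satisfied: (a) a_1·γ_1 = 0 and a_2·γ_2 = 0; (b) there exists ε ∈ {+1, −1} such that a_1 = 2ε·γ_2 and a_2 = −2ε·γ_1; (c) a_1 = a_2 and γ_2 = −γ_1. -/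
theorem stmt_7 (γ₁ γ₂ a₁ a₂ : ℝ) (ha₁ : 0 ≤ a₁) (ha₂ : 0 ≤ a₂) :
    ((γ₁ + a₁ / 2) ^ 2 + (γ₂ + a₂ / 2) ^ 2 = (γ₁ - a₁ / 2) ^ 2 + (γ₂ - a₂ / 2) ^ 2 ∧
     (γ₁ + a₁ / 2) ^ 4 + (γ₂ + a₂ / 2) ^ 4 = (γ₁ - a₁ / 2) ^ 4 + (γ₂ - a₂ / 2) ^ 4) ↔
    ((a₁ * γ₁ = 0 ∧ a₂ * γ₂ = 0) ∨
     (∃ ε : ℝ, (ε = 1 ∨ ε = -1) ∧ a₁ = 2 * ε * γ₂ ∧ a₂ = -(2 * ε * γ₁)) ∨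
     (a₁ = a₂ ∧ γ₂ = -γ₁)) := by
  constructor
  · rintro ⟨h1, h2⟩
    have e1 : a₁ * γ₁ + a₂ * γ₂ = 0 := by linear_combination h1 / 2
    have e2 : a₁ * γ₁ * (4 * γ₁ ^ 2 + a₁ ^ 2) + a₂ * γ₂ * (4 * γ₂ ^ 2 + a₂ ^ 2) = 0 := by
      linear_combination h2
    by_cases hz : a₁ * γ₁ = 0
    · left
      exact ⟨hz, by linarith [e1]⟩
    · have key : a₁ * γ₁ * ((4 * γ₁ ^ 2 + a₁ ^ 2) - (4 * γ₂ ^ 2 + a₂ ^ 2)) = 0 := by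
        linear_combination e2 - (4 * γ₂ ^ 2 + a₂ ^ 2) * e1
      have hAB : (4 * γ₁ ^ 2 + a₁ ^ 2) - (4 * γ₂ ^ 2 + a₂ ^ 2) = 0 :=
        (mul_eq_zero.mp key).resolve_left hz
      have sq : a₁ ^ 2 * γ₁ ^ 2 = a₂ ^ 2 * γ₂ ^ 2 := by
        linear_combination (a₁ * γ₁ - a₂ * γ₂) * e1
      have key2 : (a₂ ^ 2 - a₁ ^ 2) * (4 * γ₂ ^ 2 - a₁ ^ 2) = 0 := by
        linear_combination a₁ ^ 2 * hAB - 4 * sq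
      have ha1ne : a₁ ≠ 0 := fun h => hz (by rw [h]; ring)
      have ha1pos : 0 < a₁ := lt_of_le_of_ne ha₁ (Ne.symm ha1ne)
      rcases mul_eq_zero.mp key2 with hc | hb
      · -- a₁ = a₂, γ₂ = -γ₁
        right; right
        have hfac : (a₂ - a₁) * (a₂ + a₁) = 0 := by linear_combination hc
        have hsum : 0 < a₂ + a₁ := by
          rcases (mul_eq_zero.mp hfac) with h | h
          · linarith
          · nlinarith
        have haa : a₁ = a₂ := by
          have := (mul_eq_zero.mp hfac).resolve_right hsum.ne'
          linarith
        refine ⟨haa, ?_⟩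
        have hx : a₁ * (γ₁ + γ₂) = 0 := by linear_combination e1 + γ₂ * haa
        have := (mul_eq_zero.mp hx).resolve_left ha1ne
        linarith
      · -- a₁² = 4γ₂²
        right; left
        have hγ2 : γ₂ ≠ 0 := by
          intro h
          rw [h] at hb
          nlinarith
        by_cases hs : 0 < γ₂
        · have hfac : (a₁ - 2 * γ₂) * (a₁ + 2 * γ₂) = 0 := by linear_combination -hb
          have ha1 : a₁ = 2 * γ₂ := by
            have hpos : 0 < a₁ + 2 * γ₂ := by linarith
            have := (mul_eq_zero.mp hfac).resolve_right hpos.ne'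
            linarith
          refine ⟨1, Or.inl rfl, by linarith, ?_⟩
          have hx : γ₂ * (a₂ + 2 * γ₁) = 0 := by linear_combination e1 - γ₁ * ha1
          have := (mul_eq_zero.mp hx).resolve_left hγ2
          linarith
        · have hneg : γ₂ < 0 := lt_of_le_of_ne (not_lt.mp hs) hγ2
          have hfac : (a₁ - 2 * γ₂) * (a₁ + 2 * γ₂) = 0 := by linear_combination -hb
          have ha1 : a₁ = -(2 * γ₂) := by
            have hpos : 0 < a₁ - 2 * γ₂ := by linarith
            have := (mul_eq_zero.mp hfac).resolve_left hpos.ne'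
            linarith
          refine ⟨-1, Or.inr rfl, by linarith, ?_⟩
          have hx : γ₂ * (a₂ - 2 * γ₁) = 0 := by linear_combination e1 - γ₁ * ha1
          have := (mul_eq_zero.mp hx).resolve_left hγ2
          linarith
  · rintro (⟨h1, h2⟩ | ⟨ε, (rfl | rfl), rfl, rfl⟩ | ⟨rfl, rfl⟩)
    · constructor
      · linear_combination 2 * h1 + 2 * h2
      · linear_combination (4 * γ₁ ^ 2 + a₁ ^ 2) * h1 + (4 * γ₂ ^ 2 + a₂ ^ 2) * h2
    · constructor <;> ring
    · constructor <;> ring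
    · constructor <;> ring
end

section
/- Let L ≥ 1 and let a_1,…,a_L be positive integers. Let w : ℤ_{≥1} → ℚ be a finitely supported function. Then w satisfies ∑_{M'≥1} min(M, M')·w_{M'} = ∑_{ℓ=1}^{L} min(a_ℓ, M) for every integer M ≥ 1 if and only if w_M = #{ℓ ∈ {1,…,L} : a_ℓ = M} for every M ≥ 1. In particular the system admits exactly one finitely supported solution. -/
open BigOperators

theorem stmt_8 (L : ℕ) (hL : 1 ≤ L) (a : Fin L → ℕ) (ha : ∀ ℓ, 1 ≤ a ℓ)
    (w : ℕ → ℚ) (hw0 : w 0 = 0) (hwfin : (Function.support w).Finite) :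
    (∀ M : ℕ, 1 ≤ M →
        ∑ᶠ M' : ℕ, ((min M M' : ℕ) : ℚ) * w M' = ∑ ℓ : Fin L, ((min (a ℓ) M : ℕ) : ℚ)) ↔
    (∀ M : ℕ, 1 ≤ M →
        w M = ((Finset.univ.filter fun ℓ : Fin L => a ℓ = M).card : ℚ)) := by
  classical
  set S : Finset ℕ := hwfin.toFinset with hS
  have hmemS : ∀ M', M' ∈ S ↔ w M' ≠ 0 := by
    intro M'; simp [hS]
  have hfin : ∀ M : ℕ, ∑ᶠ M' : ℕ, ((min M M' : ℕ) : ℚ) * w M'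
      = ∑ M' ∈ S, ((min M M' : ℕ) : ℚ) * w M' := by
    intro M
    apply finsum_eq_finset_sum_of_support_subset
    intro M' hM'
    simp only [Function.mem_support] at hM'
    have : w M' ≠ 0 := fun h => hM' (by simp [h])
    simpa [hmemS] using this
  constructor
  · intro h M hM
    obtain ⟨m, rfl⟩ : ∃ m, M = m + 1 := ⟨M - 1, by omega⟩
    set f : ℕ → ℚ := fun M => ∑ M' ∈ S, ((min M M' : ℕ) : ℚ) * w M' with hf
    set g : ℕ → ℚ := fun M => ∑ ℓ : Fin L, ((min (a ℓ) M : ℕ) : ℚ) with hg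
    have hfg : ∀ M, f M = g M := by
      intro M
      cases M with
      | zero => simp [hf, hg]
      | succ n =>
        have hh := h (n + 1) (by omega)
        rw [hfin] at hh
        simpa [hf, hg] using hh
    have keyf : ∀ m : ℕ, f (m + 1) - f m = ∑ M' ∈ S, (if m + 1 ≤ M' then w M' else 0) := by
      intro m
      rw [hf, ← Finset.sum_sub_distrib]
      apply Finset.sum_congr rfl
      intro M' _
      have hmin : (min (m + 1) M' : ℕ) = min m M' + (if m + 1 ≤ M' then 1 else 0) := by
        split_ifs <;> omega
      rw [hmin]
      split_ifs <;> push_cast <;> ring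
    have keyg : ∀ m : ℕ, g (m + 1) - g m
        = ∑ ℓ : Fin L, (if m + 1 ≤ a ℓ then (1 : ℚ) else 0) := by
      intro m
      rw [hg, ← Finset.sum_sub_distrib]
      apply Finset.sum_congr rfl
      intro ℓ _
      have hmin : (min (a ℓ) (m + 1) : ℕ) = min (a ℓ) m + (if m + 1 ≤ a ℓ then 1 else 0) := by
        split_ifs <;> omega
      rw [hmin]
      split_ifs <;> push_cast <;> ring
    have hwM : w (m + 1) = (f (m + 1) - f m) - (f (m + 2) - f (m + 1)) := by
      rw [keyf, keyf, ← Finset.sum_sub_distrib]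
      have : ∀ M' ∈ S, (if m + 1 ≤ M' then w M' else 0) - (if m + 2 ≤ M' then w M' else 0)
          = if M' = m + 1 then w M' else 0 := by
        intro M' _
        split_ifs <;> try ring
        all_goals omega
      rw [Finset.sum_congr rfl this, Finset.sum_ite_eq' S (m + 1) w]
      split_ifs with hmem
      · rfl
      · rw [hmemS] at hmem; push_neg at hmem; exact hmem
    rw [hwM, hfg, hfg, hfg, keyg, keyg, ← Finset.sum_sub_distrib]
    have : ∀ ℓ : Fin L, (ℓ ∈ (Finset.univ : Finset (Fin L))) →
        (if m + 1 ≤ a ℓ then (1 : ℚ) else 0) - (if m + 2 ≤ a ℓ then (1 : ℚ) else 0)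
          = if a ℓ = m + 1 then (1 : ℚ) else 0 := by
      intro ℓ _
      split_ifs <;> try ring
      all_goals omega
    rw [Finset.sum_congr rfl this]
    rw [Finset.card_filter]
    push_cast
    rfl
  · intro h M hM
    rw [hfin]
    set T : Finset ℕ := S ∪ Finset.image a Finset.univ with hT
    have hsub : S ⊆ T := Finset.subset_union_left
    rw [Finset.sum_subset hsub (by
      intro M' _ hM'
      have : w M' = 0 := by
        by_contra hne
        exact hM' ((hmemS M').mpr hne)
      simp [this])]
    have hcount : ∀ M' ∈ T, ((min M M' : ℕ) : ℚ) * w M'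
        = ∑ ℓ : Fin L, (if a ℓ = M' then ((min M M' : ℕ) : ℚ) else 0) := by
      intro M' _
      rcases Nat.eq_zero_or_pos M' with h0 | hpos
      · subst h0
        have : ∀ ℓ : Fin L, a ℓ ≠ 0 := fun ℓ => by have := ha ℓ; omega
        simp [hw0, this]
      · rw [h M' hpos, Finset.sum_ite, Finset.sum_const, Finset.sum_const]
        simp [mul_comm]
    rw [Finset.sum_congr rfl hcount, Finset.sum_comm]
    apply Finset.sum_congr rfl
    intro ℓ _
    have heq : ∀ M' ∈ T, (if a ℓ = M' then ((min M M' : ℕ) : ℚ) else 0)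
        = (if M' = a ℓ then ((min M (a ℓ) : ℕ) : ℚ) else 0) := by
      intro M' _
      by_cases hc : a ℓ = M'
      · subst hc; simp
      · rw [if_neg hc, if_neg (fun h => hc h.symm)]
    rw [Finset.sum_congr rfl heq,
      Finset.sum_ite_eq' T (a ℓ) (fun _ => ((min M (a ℓ) : ℕ) : ℚ))]
    have hmem : a ℓ ∈ T := by
      rw [hT]
      exact Finset.mem_union_right _ (Finset.mem_image_of_mem a (Finset.mem_univ ℓ))
    rw [if_pos hmem, Nat.min_comm]
end

section
/- Let L ≥ 1, let a_1,…,a_L be positive integers, and let w : ℤ_{≥1} → ℚ be a finitely supported function satisfying ∑_{M'≥1} min(M, M')·w_{M'} = ∑_{ℓ=1}^{L} min(a_ℓ, M) for every integer M ≥ 1. Then for every integer M ≥ 0, ∑_{M' > M} w_{M'} = #{ℓ ∈ {1,…,L} : a_ℓ > M}. -/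
open BigOperators

theorem stmt_9 (L : ℕ) (hL : 1 ≤ L) (a : Fin L → ℕ) (ha : ∀ ℓ, 1 ≤ a ℓ)
    (w : ℕ → ℚ) (hw0 : w 0 = 0) (hwfin : (Function.support w).Finite)
    (hsys : ∀ M : ℕ, 1 ≤ M →
        ∑ᶠ M' : ℕ, ((min M M' : ℕ) : ℚ) * w M' = ∑ ℓ : Fin L, ((min (a ℓ) M : ℕ) : ℚ)) :
    ∀ M : ℕ,
      ∑ᶠ (M' : ℕ) (_ : M < M'), w M' =
        ((Finset.univ.filter fun ℓ : Fin L => M < a ℓ).card : ℚ) := by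
  -- get a common finite support finset
  obtain ⟨N, hN⟩ : ∃ N : ℕ, Function.support w ⊆ ↑(Finset.range N) := by
    refine ⟨(hwfin.toFinset.sup id) + 1, fun x hx => ?_⟩
    simp only [Finset.coe_range, Set.mem_Iio]
    have : x ∈ hwfin.toFinset := hwfin.mem_toFinset.mpr hx
    exact Nat.lt_succ_of_le (Finset.le_sup (f := id) this)
  set S := Finset.range N with hS
  -- rewrite the tail finsum as a finset sum
  have tail_eq : ∀ M : ℕ, (∑ᶠ (M' : ℕ) (_ : M < M'), w M')
      = ∑ n ∈ S.filter (fun n => M < n), w n := by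
    intro M
    refine finsum_mem_eq_sum_of_inter_support_eq w ?_
    ext x
    simp only [Set.mem_inter_iff, Set.mem_setOf_eq, Finset.coe_filter, Function.mem_support]
    constructor
    · rintro ⟨h1, h2⟩
      exact ⟨⟨by simpa using hN h2, h1⟩, h2⟩
    · rintro ⟨⟨_, h1⟩, h2⟩
      exact ⟨h1, h2⟩
  -- rewrite the system finsums as finset sums
  have sys_eq : ∀ M : ℕ, (∑ᶠ M' : ℕ, ((min M M' : ℕ) : ℚ) * w M')
      = ∑ n ∈ S, ((min M n : ℕ) : ℚ) * w n := by
    intro M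
    refine finsum_eq_sum_of_support_subset _ ?_
    intro x hx
    apply hN
    intro hw
    apply hx
    simp [hw]
  -- key: the finset tail sum for M ≥ 1 via difference
  have key : ∀ M : ℕ, 1 ≤ M →
      ∑ n ∈ S.filter (fun n => M < n), w n
        = ((Finset.univ.filter fun ℓ : Fin L => M < a ℓ).card : ℚ) := by
    intro M hM
    have h1 := hsys M hM
    have h2 := hsys (M + 1) (by omega)
    rw [sys_eq] at h1 h2
    have hdiff : ∑ n ∈ S.filter (fun n => M < n), w n
        = ∑ n ∈ S, ((min (M+1) n : ℕ) : ℚ) * w n - ∑ n ∈ S, ((min M n : ℕ) : ℚ) * w n := by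
      rw [← Finset.sum_sub_distrib]
      rw [Finset.sum_filter]
      apply Finset.sum_congr rfl
      intro n _
      rcases lt_or_ge M n with h | h
      · have : min (M+1) n = min M n + 1 := by omega
        rw [this]
        push_cast
        rw [if_pos h]
        ring
      · have : min (M+1) n = min M n := by omega
        rw [this, if_neg (by omega), sub_self]
    rw [hdiff, h1, h2, ← Finset.sum_sub_distrib]
    rw [Finset.card_filter, Nat.cast_sum]
    apply Finset.sum_congr rfl
    intro ℓ _
    rcases lt_or_ge M (a ℓ) with h | h
    · have : min (a ℓ) (M+1) = min (a ℓ) M + 1 := by omega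
      rw [this, if_pos h]
      push_cast
      ring
    · have : min (a ℓ) (M+1) = min (a ℓ) M := by omega
      rw [this, if_neg (by omega), sub_self, Nat.cast_zero]
  intro M
  rw [tail_eq]
  rcases Nat.eq_zero_or_pos M with rfl | hM
  · -- base case M = 0 : use hsys 1
    have h1 := hsys 1 le_rfl
    rw [sys_eq] at h1
    have hl : ∑ n ∈ S.filter (fun n => 0 < n), w n
        = ∑ n ∈ S, ((min 1 n : ℕ) : ℚ) * w n := by
      rw [Finset.sum_filter]
      apply Finset.sum_congr rfl
      intro n _
      rcases Nat.eq_zero_or_pos n with rfl | h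
      · simp [hw0]
      · rw [if_pos h]
        have : min 1 n = 1 := by omega
        simp [this]
    rw [hl, h1]
    have : (Finset.univ.filter fun ℓ : Fin L => 0 < a ℓ) = Finset.univ := by
      apply Finset.filter_true_of_mem
      intro ℓ _
      exact ha ℓ
    rw [this]
    simp only [Finset.card_univ, Fintype.card_fin]
    have hmin : ∀ ℓ : Fin L, min (a ℓ) 1 = 1 := fun ℓ => by have := ha ℓ; omega
    simp [hmin]
  · exact key M hM
end

section
/- Let N ≥ 2 and let t > 0 be a real number. Let A(t) be the (N−1)×(N−1) real matrix with entries A(t)_{ij} = 2·cosh(t) if i = j, A(t)_{ij} = −1 if |i − j| = 1, and A(t)_{ij} = 0 otherwise (indices 1 ≤ i, j ≤ N−1). Then A(t) is invertible and its inverse has entries (A(t)^{−1})_{ij} = sinh((N − max(i, j))·t)·sinh(min(i, j)·t) / (sinh(N·t)·sinh(t)). -/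
open Matrix Real BigOperators

/-!
With `D = sinh (N t) · sinh t`, the columns of `D · B` are Green's functions of the three-term
operator `u ↦ 2 cosh t · u(m) - u(m - 1) - u(m + 1)` on `0, …, N` with Dirichlet conditions at `0`
and `N`: in each column `n`, `m ↦ sinh ((N - max m n) t) · sinh (min m n · t)` vanishes at both
ends, solves the homogeneous recurrence on each side of `n` (since `sinh (x - t) + sinh (x + t) =
2 cosh t · sinh x`), and at `m = n` the defect is `sinh (N t) · sinh t` by the addition formula.
Hence `A (D · B) = D · 1`, and `B A = 1` follows for square matrices.
-/

def tridiag {R : Type*} [Ring R] (n : ℕ) (a : R) : Matrix (Fin n) (Fin n) R :=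
  of fun i j => if i = j then a else if (i : ℕ) + 1 = j ∨ (j : ℕ) + 1 = i then -1 else 0

theorem tridiag_mul_apply {R : Type*} [Ring R] {n : ℕ} (a : R) (f : ℕ → R)
    (h0 : f 0 = 0) (hn : f (n + 1) = 0) (i : Fin n) :
    ∑ j : Fin n, tridiag n a i j * f (j + 1) = a * f (i + 1) - f i - f (i + 2) := by
  have hterm : ∀ j : Fin n, tridiag n a i j * f (j + 1) =
      (if i = j then a * f (i + 1) else 0) - (if (j : ℕ) = i + 1 then f (j + 1) else 0)
        - (if (j : ℕ) + 1 = i then f (j + 1) else 0) := by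
    rintro ⟨j, hj⟩
    obtain ⟨i, hi⟩ := i
    simp only [tridiag, of_apply, Fin.ext_iff]
    split_ifs <;> first | (exfalso; omega) | (subst_vars; simp)
  have hright : ∑ j : Fin n, (if (j : ℕ) = i + 1 then f (j + 1) else 0) = f (i + 2) := by
    rw [Fin.sum_univ_eq_sum_range (fun j => if j = (i : ℕ) + 1 then f (j + 1) else 0),
      Finset.sum_ite_eq']
    split_ifs with h
    · rfl
    · rw [Finset.mem_range] at h
      rw [show (i : ℕ) + 2 = n + 1 by omega, hn]
  have hleft : ∑ j : Fin n, (if (j : ℕ) + 1 = i then f (j + 1) else 0) = f i := by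
    have := Finset.sum_range_succ' (fun m => if m = (i : ℕ) then f m else 0) n
    rw [Finset.sum_ite_eq', if_pos (Finset.mem_range.2 (by omega))] at this
    rw [Fin.sum_univ_eq_sum_range (fun j => if j + 1 = (i : ℕ) then f (j + 1) else 0), this]
    simp [h0]
  rw [Finset.sum_congr rfl fun j _ => hterm j, Finset.sum_sub_distrib, Finset.sum_sub_distrib,
    Finset.sum_ite_eq, if_pos (Finset.mem_univ i), hright, hleft, sub_right_comm]

theorem two_cosh_mul_sinh_sub_sinh_sub_sinh {x y z t : ℝ} (hy : y = x - t) (hz : z = x + t) :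
    2 * cosh t * sinh x - sinh y - sinh z = 0 := by
  subst hy hz; rw [sinh_sub, sinh_add]; ring

theorem two_cosh_mul_sinh_mul_sinh_sub {a b c a' b' t : ℝ} (hc : c = a + b) (ha : a' = a - t)
    (hb : b' = b - t) :
    2 * cosh t * sinh a * sinh b - sinh a * sinh b' - sinh a' * sinh b = sinh c * sinh t := by
  subst hc ha hb; rw [sinh_sub, sinh_sub, sinh_add]; ring

noncomputable def sinhGreen (N : ℕ) (t : ℝ) (m n : ℕ) : ℝ :=
  sinh (((N : ℝ) - ((max m n : ℕ) : ℝ)) * t) * sinh (((min m n : ℕ) : ℝ) * t)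

theorem sinhGreen_zero_left (N : ℕ) (t : ℝ) (n : ℕ) : sinhGreen N t 0 n = 0 := by
  simp [sinhGreen]

theorem sinhGreen_self_left (N : ℕ) (t : ℝ) {n : ℕ} (hn : n ≤ N) : sinhGreen N t N n = 0 := by
  simp [sinhGreen, max_eq_left hn]

theorem sinhGreen_recurrence (N : ℕ) (t : ℝ) (i n : ℕ) :
    2 * cosh t * sinhGreen N t (i + 1) n - sinhGreen N t i n - sinhGreen N t (i + 2) n =
      if i + 1 = n then sinh (N * t) * sinh t else 0 := by
  unfold sinhGreen
  rcases lt_trichotomy (i + 1) n with h | rfl | h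
  · rw [if_neg h.ne, max_eq_right h.le, max_eq_right (by omega : i ≤ n),
      max_eq_right (by omega : i + 2 ≤ n), min_eq_left h.le, min_eq_left (by omega : i ≤ n),
      min_eq_left (by omega : i + 2 ≤ n)]
    push_cast
    linear_combination sinh (((N : ℝ) - n) * t) *
      two_cosh_mul_sinh_sub_sinh_sub_sinh (x := ((i : ℝ) + 1) * t) (y := (i : ℝ) * t)
        (z := ((i : ℝ) + 2) * t) (t := t) (by ring) (by ring)
  · rw [if_pos rfl, max_self, min_self, max_eq_right (by omega : i ≤ i + 1),
      min_eq_left (by omega : i ≤ i + 1), max_eq_left (by omega : i + 1 ≤ i + 2),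
      min_eq_right (by omega : i + 1 ≤ i + 2)]
    push_cast
    linear_combination two_cosh_mul_sinh_mul_sinh_sub (a := ((N : ℝ) - (i + 1)) * t)
      (b := ((i : ℝ) + 1) * t) (c := N * t) (a' := ((N : ℝ) - (i + 2)) * t) (b' := (i : ℝ) * t)
      (t := t) (by ring) (by ring) (by ring)
  · rw [if_neg h.ne', max_eq_left h.le, max_eq_left (by omega : n ≤ i),
      max_eq_left (by omega : n ≤ i + 2), min_eq_right h.le, min_eq_right (by omega : n ≤ i),
      min_eq_right (by omega : n ≤ i + 2)]
    push_cast
    linear_combination sinh ((n : ℝ) * t) *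
      two_cosh_mul_sinh_sub_sinh_sub_sinh (x := ((N : ℝ) - (i + 1)) * t)
        (y := ((N : ℝ) - (i + 2)) * t) (z := ((N : ℝ) - i) * t) (t := t)
        (by ring) (by ring)

theorem tridiag_mul_sinhGreen (N : ℕ) (t : ℝ) :
    tridiag (N - 1) (2 * cosh t) * of (fun j k : Fin (N - 1) => sinhGreen N t (j + 1) (k + 1)) =
      (sinh (N * t) * sinh t) • (1 : Matrix (Fin (N - 1)) (Fin (N - 1)) ℝ) := by
  ext i k
  have hN : N - 1 + 1 = N := by have := i.isLt; omega
  simp only [mul_apply, Matrix.smul_apply, one_apply, of_apply]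
  rw [tridiag_mul_apply (f := fun m => sinhGreen N t m (k + 1)) _ (sinhGreen_zero_left N t _)
    (by rw [hN]; exact sinhGreen_self_left N t (by omega)), sinhGreen_recurrence]
  simp only [Fin.ext_iff, add_left_inj, smul_eq_mul, mul_ite, mul_one, mul_zero]

theorem stmt_12 (N : ℕ) (hN : 2 ≤ N) (t : ℝ) (ht : 0 < t)
    (A B : Matrix (Fin (N - 1)) (Fin (N - 1)) ℝ)
    (hA : ∀ i k, A i k =
      if i = k then 2 * Real.cosh t
      else if ((i : ℕ) + 1 = (k : ℕ) ∨ (k : ℕ) + 1 = (i : ℕ)) then -1 else 0)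
    (hB : ∀ i k, B i k =
      Real.sinh (((N : ℝ) - ((max ((i : ℕ) + 1) ((k : ℕ) + 1) : ℕ) : ℝ)) * t) *
        Real.sinh (((min ((i : ℕ) + 1) ((k : ℕ) + 1) : ℕ) : ℝ) * t) /
        (Real.sinh ((N : ℝ) * t) * Real.sinh t)) :
    A * B = 1 ∧ B * A = 1 := by
  have hD : sinh (N * t) * sinh t ≠ 0 := by
    have hNt : 0 < (N : ℝ) * t := mul_pos (by exact_mod_cast (by omega : 0 < N)) ht
    exact (mul_pos (sinh_pos_iff.2 hNt) (sinh_pos_iff.2 ht)).ne'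
  have hA' : A = tridiag (N - 1) (2 * cosh t) := ext hA
  have hB' : B = (sinh (N * t) * sinh t)⁻¹ •
      of (fun j k : Fin (N - 1) => sinhGreen N t (j + 1) (k + 1)) := by
    ext j k
    rw [hB, Matrix.smul_apply, of_apply, smul_eq_mul, inv_mul_eq_div, sinhGreen]
  have hAB : A * B = 1 := by
    rw [hA', hB', mul_smul_comm, tridiag_mul_sinhGreen, smul_smul, inv_mul_cancel₀ hD, one_smul]
  exact ⟨hAB, mul_eq_one_comm.mp hAB⟩
end

section
/- Let α, β be nonnegative integers (representing α = 2m, β = 2n), and define Ψ(λ) = 2·[ ((α+β)/2 + 1)/(((α+β)/2 + 1)² + λ²) + (|α−β|/2)/((|α−β|/2)² + λ²) + 2·∑_{r=1}^{min(α,β)} ((|α−β|/2 + r)/((|α−β|/2 + r)² + λ²)) ] for λ ∈ ℝ, with the convention that a term with numerator 0 is 0. Then for every real p ≠ 0, (1/(2π)) ∫_{−∞}^{∞} e^{ipλ} Ψ(λ) dλ = 2·cosh(|p|/2)·exp(−|p|·(max(α,β)+1)/2)·sinh(|p|·(min(α,β)+1)/2)/sinh(|p|/2) − δ_{α,β}, where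 δ_{α,β} = 1 if α = β and 0 otherwise. -/
/-!
Ψ is a finite combination of Cauchy kernels `a / (a² + λ²)`, and for `a > 0`
`∫ e^{ipλ} a / (a² + λ²) dλ = π e^{-a|p|}`: the Fourier transform of `e^{-a|x|}` is computed by
splitting the line at `0`, and Fourier inversion turns it around. The kernel with
`a = |α - β| / 2` vanishes identically when `α = β`, which produces the `δ`. Writing
`m = min α β`, `k = max α β - m` and `x = e^{-|p|}`, the transform `Ψ̂(p)` is
`e^{-k|p|/2} (1 + 2 ∑_{r=1}^m x^r + x^{m+1}) - δ`, and
`(1 + x) ∑_{r=0}^m x^r = 1 + 2 ∑_{r=1}^m x^r + x^{m+1}` turns this into the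
`cosh · sinh / sinh` closed form.
-/

open MeasureTheory Real Set
open Complex (I)
open scoped Complex

lemma integrable_div_sq_add_sq (a : ℝ) : Integrable fun x : ℝ => a / (a ^ 2 + x ^ 2) := by
  rcases eq_or_ne a 0 with rfl | ha
  · simp
  refine (integrable_inv_one_add_sq.comp_div ha |>.const_mul a⁻¹).congr (.of_forall fun x => ?_)
  field_simp

lemma integrable_cexp_mul_div_sq_add_sq (p a : ℝ) :
    Integrable fun x : ℝ => cexp (I * p * x) * ((a / (a ^ 2 + x ^ 2) : ℝ) : ℂ) := by
  refine (integrable_div_sq_add_sq a).ofReal.bdd_mul (c := 1) (by fun_prop)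
    (.of_forall fun x => ?_)
  rw [Complex.norm_exp]
  simp

lemma integrable_exp_neg_mul_abs {a : ℝ} (ha : 0 < a) :
    Integrable fun x : ℝ => rexp (-(a * |x|)) := by
  rw [← integrableOn_univ, ← Iic_union_Ioi (a := 0)]
  refine IntegrableOn.union ?_ ?_
  · refine (integrableOn_exp_mul_Iic ha 0).congr_fun (fun x hx => ?_) measurableSet_Iic
    rw [abs_of_nonpos hx, mul_neg, neg_neg]
  · refine (integrableOn_exp_mul_Ioi (neg_neg_of_pos ha) 0).congr_fun (fun x hx => ?_)
      measurableSet_Ioi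
    simp [abs_of_pos (mem_Ioi.mp hx)]

lemma integral_cexp_mul_exp_neg_mul_abs {a : ℝ} (ha : 0 < a) (b : ℝ) :
    ∫ x : ℝ, cexp (I * b * x) * (rexp (-(a * |x|)) : ℂ) =
      ((2 * a / (a ^ 2 + b ^ 2) : ℝ) : ℂ) := by
  have hleft : ∀ x ∈ Iic (0 : ℝ),
      cexp (I * b * x) * (rexp (-(a * |x|)) : ℂ) = cexp ((a + I * b) * x) := by
    intro x hx
    rw [abs_of_nonpos hx, Complex.ofReal_exp, ← Complex.exp_add]
    push_cast; ring_nf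
  have hright : ∀ x ∈ Ioi (0 : ℝ),
      cexp (I * b * x) * (rexp (-(a * |x|)) : ℂ) = cexp ((-a + I * b) * x) := by
    intro x hx
    rw [abs_of_pos hx, Complex.ofReal_exp, ← Complex.exp_add]
    push_cast; ring_nf
  have hre₁ : 0 < (a + I * b).re := by simpa using ha
  have hre₂ : (-a + I * b).re < 0 := by simpa using ha
  rw [← intervalIntegral.integral_Iic_add_Ioi (b := 0)
      ((integrableOn_exp_mul_complex_Iic hre₁ 0).congr_fun (fun x hx => (hleft x hx).symm)
        measurableSet_Iic)
      ((integrableOn_exp_mul_complex_Ioi hre₂ 0).congr_fun (fun x hx => (hright x hx).symm)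
        measurableSet_Ioi),
    setIntegral_congr_fun measurableSet_Iic hleft, setIntegral_congr_fun measurableSet_Ioi hright,
    integral_exp_mul_complex_Iic hre₁, integral_exp_mul_complex_Ioi hre₂]
  have h₁ : (a : ℂ) + I * b ≠ 0 := fun h => by simpa [ha.ne'] using congrArg Complex.re h
  have h₂ : -(a : ℂ) + I * b ≠ 0 := fun h => by simpa [ha.ne'] using congrArg Complex.re h
  have h₃ : ((a ^ 2 + b ^ 2 : ℝ) : ℂ) ≠ 0 := by
    exact_mod_cast (by positivity : a ^ 2 + b ^ 2 ≠ 0)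
  push_cast at h₃ ⊢
  simp only [mul_zero, Complex.exp_zero]
  field_simp
  linear_combination (-2 * a * b ^ 2 : ℂ) * Complex.I_sq

open scoped FourierTransform in
lemma fourier_exp_neg_mul_abs {a : ℝ} (ha : 0 < a) (w : ℝ) :
    𝓕 (fun x : ℝ => (rexp (-(a * |x|)) : ℂ)) w =
      ((2 * a / (a ^ 2 + (2 * π * w) ^ 2) : ℝ) : ℂ) := by
  rw [Real.fourier_real_eq_integral_exp_smul, ← neg_sq (2 * π * w),
    ← integral_cexp_mul_exp_neg_mul_abs ha]
  congr 1 with x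
  rw [smul_eq_mul]
  push_cast
  ring_nf

open scoped FourierTransform in
lemma integral_cexp_mul_div_sq_add_sq {a : ℝ} (ha : 0 < a) (p : ℝ) :
    ∫ x : ℝ, cexp (I * p * x) * ((a / (a ^ 2 + x ^ 2) : ℝ) : ℂ) =
      π * rexp (-(a * |p|)) := by
  set f : ℝ → ℂ := fun x => (rexp (-(a * |x|)) : ℂ)
  have hf : Integrable f := (integrable_exp_neg_mul_abs ha).ofReal
  have hFf : 𝓕 f = fun w => ((2 * a / (a ^ 2 + (2 * π * w) ^ 2) : ℝ) : ℂ) :=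
    funext (fourier_exp_neg_mul_abs ha)
  have hFf_int : Integrable (𝓕 f) := by
    rw [hFf]
    refine (((integrable_div_sq_add_sq a).const_mul 2).comp_mul_left' (R := 2 * π)
      (by positivity)).ofReal.congr (.of_forall fun w => ?_)
    simp only [mul_div_assoc]
    -- `Integrable.ofReal` casts through `RCLike.ofReal`, which is `Complex.ofReal` definitionally
    rfl
  have hinv := hf.fourierInv_fourier_eq hFf_int (v := p) (by fun_prop)
  rw [Real.fourierInv_eq_fourier_neg, Real.fourier_real_eq_integral_exp_smul, hFf] at hinv
  set g : ℝ → ℂ := fun x => cexp (I * p * x) * ((2 * a / (a ^ 2 + x ^ 2) : ℝ) : ℂ)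
  have hg : ∫ x, g x = (2 * π : ℝ) • f p := calc
    ∫ x, g x = (2 * π : ℝ) • (2 * π : ℝ)⁻¹ • ∫ x, g x :=
        (smul_inv_smul₀ (by positivity) _).symm
    _ = (2 * π : ℝ) • ∫ x, g (2 * π * x) := by
        rw [Measure.integral_comp_mul_left, abs_of_pos (by positivity)]
    _ = (2 * π : ℝ) • f p := by
      rw [← hinv]
      congr 2 with v
      simp only [g, smul_eq_mul]
      push_cast
      ring_nf
  have hsplit :
      ∫ x, g x = 2 * ∫ x : ℝ, cexp (I * p * x) * ((a / (a ^ 2 + x ^ 2) : ℝ) : ℂ) := by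
    rw [← integral_const_mul]
    congr 1 with x
    simp only [g]
    push_cast
    ring
  rw [hsplit, Complex.real_smul, Complex.ofReal_mul, Complex.ofReal_ofNat] at hg
  linear_combination hg / 2

lemma integral_cexp_mul_sum_div_sq_add_sq (p : ℝ) (m : ℕ) {c d : ℝ} (hc : 0 < c)
    (hd : 0 ≤ d) :
    ∫ x : ℝ, cexp (I * p * x) * ((2 * (c / (c ^ 2 + x ^ 2) + d / (d ^ 2 + x ^ 2) +
        2 * ∑ r ∈ Finset.Icc 1 m, (d + r) / ((d + r) ^ 2 + x ^ 2)) : ℝ) : ℂ) =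
      ((2 * π * (rexp (-(c * |p|)) + (if d = 0 then 0 else rexp (-(d * |p|))) +
        2 * ∑ r ∈ Finset.Icc 1 m, rexp (-((d + r) * |p|))) : ℝ) : ℂ) := by
  set K : ℝ → ℝ → ℂ := fun a x => cexp (I * p * x) * ((a / (a ^ 2 + x ^ 2) : ℝ) : ℂ)
  have hK : ∀ a, Integrable (K a) := integrable_cexp_mul_div_sq_add_sq p
  have hKpos : ∀ a, 0 < a → ∫ x, K a x = π * rexp (-(a * |p|)) := fun a ha =>
    integral_cexp_mul_div_sq_add_sq ha p
  have hKd : ∫ x, K d x = if d = 0 then (0 : ℂ) else π * rexp (-(d * |p|)) := by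
    rcases hd.eq_or_lt with rfl | hd
    -- `0 / (0 ^ 2 + x ^ 2) = 0` for every `x`, including `x = 0`
    · simp [K]
    · rw [if_neg hd.ne', hKpos d hd]
  have hKr : ∀ r ∈ Finset.Icc 1 m, ∫ x, K (d + r) x = π * rexp (-((d + r) * |p|)) :=
    fun r hr => hKpos _ (by have := (Finset.mem_Icc.mp hr).1; positivity)
  calc _ = ∫ x, 2 * K c x + 2 * K d x + 4 * ∑ r ∈ Finset.Icc 1 m, K (d + r) x := by
        congr 1 with x
        simp only [K, ← Finset.mul_sum]
        push_cast
        ring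
    _ = 2 * (∫ x, K c x) + 2 * (∫ x, K d x) +
          4 * ∑ r ∈ Finset.Icc 1 m, ∫ x, K (d + r) x := by
        have hc' := (hK c).const_mul 2
        have hd' := (hK d).const_mul 2
        have hr' := (integrable_finsetSum (Finset.Icc 1 m) fun r _ => hK (d + r)).const_mul 4
        have hcd' : Integrable fun x => 2 * K c x + 2 * K d x := hc'.add hd'
        rw [integral_add hcd' hr', integral_add hc' hd', integral_const_mul,
          integral_const_mul, integral_const_mul, integral_finsetSum _ fun r _ => hK _]
    _ = _ := by
        simp only [hKpos c hc, hKd, Finset.sum_congr rfl hKr, ← Finset.mul_sum]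
        split_ifs <;> push_cast <;> ring

lemma one_add_mul_geom_sum {R : Type*} [CommSemiring R] (x : R) (m : ℕ) :
    (1 + x) * ∑ r ∈ Finset.range (m + 1), x ^ r =
      1 + 2 * ∑ r ∈ Finset.Icc 1 m, x ^ r + x ^ (m + 1) := by
  induction m with
  | zero => simp
  | succ m ih =>
    rw [Finset.sum_range_succ, mul_add, ih, Finset.sum_Icc_succ_top (by omega)]
    ring

lemma two_cosh_mul_exp_mul_sinh_div_sinh (m k : ℕ) {t : ℝ} (ht : t ≠ 0) :
    2 * cosh (t / 2) * rexp (-(t * (((m + k : ℕ) : ℝ) + 1) / 2)) *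
        sinh (t * ((m : ℝ) + 1) / 2) / sinh (t / 2) =
      rexp (-(k / 2 * t)) * ((1 + rexp (-t)) * ∑ r ∈ Finset.range (m + 1), rexp (-t) ^ r) := by
  set u := rexp (t / 2) with hu_def
  have hu : ∀ n : ℕ, rexp (n * (t / 2)) = u ^ n := fun n => exp_nat_mul _ n
  have hu0 : u ≠ 0 := (exp_pos _).ne'
  have hu2 : u ^ 2 ≠ 1 := by
    rw [← hu, Ne, exp_eq_one_iff]
    simpa using ht
  have h1 : rexp (-(t * (((m + k : ℕ) : ℝ) + 1) / 2)) = (u ^ (m + k + 1))⁻¹ := by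
    rw [← hu, ← exp_neg]; push_cast; ring_nf
  have h2 : rexp (t * ((m : ℝ) + 1) / 2) = u ^ (m + 1) := by
    rw [← hu]; push_cast; ring_nf
  have h3 : rexp (-(k / 2 * t)) = (u ^ k)⁻¹ := by
    rw [← hu, ← exp_neg]; ring_nf
  have h4 : rexp (-t) = (u ^ 2)⁻¹ := by
    rw [← hu, ← exp_neg]; push_cast; ring_nf
  rw [h1, h3, h4, cosh_eq, sinh_eq, sinh_eq, exp_neg, exp_neg, h2, ← hu_def,
    geom_sum_eq (by rwa [Ne, inv_eq_one])]
  have : u ^ 2 - 1 ≠ 0 := sub_ne_zero.mpr hu2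
  simp only [inv_pow, ← pow_mul]
  field_simp
  ring

lemma exp_add_sum_exp_eq (m k : ℕ) {t : ℝ} (ht : t ≠ 0) :
    rexp (-(((2 * m + k) / 2 + 1) * t)) + (if k = 0 then 0 else rexp (-(k / 2 * t))) +
        2 * ∑ r ∈ Finset.Icc 1 m, rexp (-((k / 2 + r) * t)) =
      2 * cosh (t / 2) * rexp (-(t * (((m + k : ℕ) : ℝ) + 1) / 2)) *
        sinh (t * ((m : ℝ) + 1) / 2) / sinh (t / 2) - if k = 0 then 1 else 0 := by
  have hexp : ∀ r : ℕ, rexp (-((k / 2 + r) * t)) = rexp (-(k / 2 * t)) * rexp (-t) ^ r := by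
    intro r
    rw [← exp_nat_mul, ← Real.exp_add]
    ring_nf
  rw [two_cosh_mul_exp_mul_sinh_div_sinh m k ht, one_add_mul_geom_sum,
    Finset.sum_congr rfl fun r _ => hexp r, ← Finset.mul_sum,
    show ((2 * m + k) / 2 + 1 : ℝ) = k / 2 + (m + 1 : ℕ) by push_cast; ring, hexp]
  rcases eq_or_ne k 0 with rfl | hk
  · simp only [Nat.cast_zero, zero_div, zero_mul, neg_zero, exp_zero, one_mul, ↓reduceIte,
      add_zero]
    ring
  · simp only [hk, ↓reduceIte, sub_zero]
    ring

theorem stmt_17 (α β : ℕ) (p : ℝ) (hp : p ≠ 0) :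
    ((1 / (2 * Real.pi) : ℝ) : ℂ) *
        ∫ lam : ℝ, Complex.exp (Complex.I * (p : ℂ) * (lam : ℂ)) *
          (((2 * ((((α : ℝ) + (β : ℝ)) / 2 + 1) /
                ((((α : ℝ) + (β : ℝ)) / 2 + 1) ^ 2 + lam ^ 2) +
              (|(α : ℝ) - (β : ℝ)| / 2) / ((|(α : ℝ) - (β : ℝ)| / 2) ^ 2 + lam ^ 2) +
              2 * ∑ r ∈ Finset.Icc 1 (min α β),
                (|(α : ℝ) - (β : ℝ)| / 2 + (r : ℝ)) /
                  ((|(α : ℝ) - (β : ℝ)| / 2 + (r : ℝ)) ^ 2 + lam ^ 2)) : ℝ)) : ℂ) =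
      ((2 * Real.cosh (|p| / 2) *
            Real.exp (-(|p| * ((max α β : ℕ) + 1 : ℝ) / 2)) *
            Real.sinh (|p| * ((min α β : ℕ) + 1 : ℝ) / 2) / Real.sinh (|p| / 2) -
          (if α = β then 1 else 0) : ℝ) : ℂ) := by
  obtain ⟨m, k, hmin, hmax⟩ : ∃ m k : ℕ, min α β = m ∧ max α β = m + k :=
    ⟨_, _, rfl, (Nat.add_sub_cancel' min_le_max).symm⟩
  have hsum : (α : ℝ) + β = 2 * m + k := by exact_mod_cast (by omega : α + β = 2 * m + k)
  have hdiff : |(α : ℝ) - β| = k := by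
    rw [← max_sub_min_eq_abs', ← Nat.cast_max, ← Nat.cast_min, hmin, hmax]
    push_cast
    ring
  have hk : α = β ↔ k = 0 := by omega
  rw [hsum, hdiff, hmin, hmax, if_congr hk rfl rfl,
    integral_cexp_mul_sum_div_sq_add_sq p m (by positivity) (by positivity),
    ← exp_add_sum_exp_eq m k (abs_ne_zero.mpr hp)]
  simp only [div_eq_zero_iff, Nat.cast_eq_zero, two_ne_zero, or_false]
  push_cast
  field_simp
end
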